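/- arXiv:1205.1106 — 4 statements merged into one kernel-verified Lean document; each statement's English description precedes it below -/
import Mathlib

section
/- The restriction map α ↦ α|_B from Con 𝐀 to Con 𝐁 is a residuated mapping whose residual is the map β ↦ β̂; that is, for every α ∈ Con 𝐀 and every β ∈ Con 𝐁, one has α|_B ≤ β if and only if α ≤ β̂. -/
namespace Overalg

variable {A : Type*}

/-- `θ` is an equivalence relation on the whole type `A`, viewed as a set of pairs. -/
def IsEquivRel (θ : Set (A × A)) : Prop :=
  (∀ x : A, (x, x) ∈ θ) ∧ (∀ x y : A, (x, y) ∈ θ → (y, x) ∈ θ) ∧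
    (∀ x y z : A, (x, y) ∈ θ → (y, z) ∈ θ → (x, z) ∈ θ)

/-- `θ` is an equivalence relation on the subset `B` of `A`, viewed as a set of pairs. -/
def IsEquivOn (B : Set A) (θ : Set (A × A)) : Prop :=
  θ ⊆ B ×ˢ B ∧ (∀ x ∈ B, (x, x) ∈ θ) ∧ (∀ x y : A, (x, y) ∈ θ → (y, x) ∈ θ) ∧
    (∀ x y z : A, (x, y) ∈ θ → (y, z) ∈ θ → (x, z) ∈ θ)

/-- The clone of unary polynomials of the unary algebra `⟨A, F⟩`: the smallest set of
maps `A → A` containing `F`, the identity and all constants, closed under composition. -/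
inductive Pol1 (F : Set (A → A)) : (A → A) → Prop
  | base : ∀ f ∈ F, Pol1 F f
  | id : Pol1 F _root_.id
  | const : ∀ a : A, Pol1 F (fun _ => a)
  | comp : ∀ f g : A → A, Pol1 F f → Pol1 F g → Pol1 F (f ∘ g)

/-- A congruence of the unary algebra `⟨A, F⟩`. -/
def IsCon (F : Set (A → A)) (θ : Set (A × A)) : Prop :=
  IsEquivRel θ ∧ ∀ f ∈ F, ∀ p ∈ θ, (f p.1, f p.2) ∈ θ

end Overalg

namespace Overalg

variable {A : Type*}

/-- The congruence of `⟨A, F⟩` generated by a set of pairs. -/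
def cgA (F : Set (A → A)) (s : Set (A × A)) : Set (A × A) :=
  ⋂₀ {θ | IsCon F θ ∧ s ⊆ θ}

/-- A congruence of the algebra `𝐁 = ⟨B, F_B⟩`, where `B = e(A)` and
`F_B = {(e ∘ f)|_B : f ∈ Pol₁(𝐀)}`. -/
def IsConB (F : Set (A → A)) (e : A → A) (β : Set (A × A)) : Prop :=
  IsEquivOn (Set.range e) β ∧
    ∀ f : A → A, Pol1 F f → ∀ p ∈ β, (e (f p.1), e (f p.2)) ∈ β

/-- The congruence of `𝐁` generated by a set of pairs. -/
def cgB (F : Set (A → A)) (e : A → A) (s : Set (A × A)) : Set (A × A) :=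
  ⋂₀ {β | IsConB F e β ∧ s ⊆ β}

/-- McKenzie's hat operator: `β̂ = {(x,y) : ∀ f ∈ Pol₁(𝐀), (e(f x), e(f y)) ∈ β}`. -/
def hatRel (F : Set (A → A)) (e : A → A) (β : Set (A × A)) : Set (A × A) :=
  {p : A × A | ∀ f : A → A, Pol1 F f → (e (f p.1), e (f p.2)) ∈ β}

end Overalg


namespace Overalg
theorem IsCon.pol1 {A : Type*} {F : Set (A → A)} {α : Set (A × A)} (hα : IsCon F α)
    {f : A → A} (hf : Pol1 F f) : ∀ p ∈ α, (f p.1, f p.2) ∈ α := by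
  induction hf with
  | base g hg => exact hα.2 g hg
  | id => exact fun p hp => hp
  | const a => exact fun p _ => hα.1.1 a
  | comp g h _ _ ihg ihh => exact fun p hp => ihg _ (ihh p hp)
end Overalg

open Overalg in
/-- The restriction map `α ↦ α|_B` from `Con 𝐀` to `Con 𝐁` is a residuated mapping whose
residual is `β ↦ β̂`: for all `α ∈ Con 𝐀` and `β ∈ Con 𝐁`, `α|_B ≤ β ↔ α ≤ β̂`. -/
theorem residuated_restriction_hat {A : Type*} (F : Set (A → A)) (e : A → A)
    (heP : Pol1 F e) (hee : e ∘ e = e)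
    (α β : Set (A × A)) (hα : IsCon F α) (hβ : IsConB F e β) :
    α ∩ (Set.range e ×ˢ Set.range e) ⊆ β ↔ α ⊆ hatRel F e β := by
  constructor
  · intro h p hp f hf
    refine h ⟨hα.pol1 (Pol1.comp e f heP hf) p hp, ⟨f p.1, rfl⟩, ⟨f p.2, rfl⟩⟩
  · rintro h ⟨x, y⟩ ⟨hxy, ⟨a, ha⟩, ⟨b, hb⟩⟩
    have := h hxy _root_.id Pol1.id
    simp only [id_eq] at this ha hb
    rwa [← ha, ← hb, show e (e a) = e a from congrFun hee a,
      show e (e b) = e b from congrFun hee b, ha, hb] at this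
end

section
/- The restriction map α ↦ α|_B from Con 𝐀 to Con 𝐁 is surjective and preserves arbitrary meets and arbitrary joins; in particular, for every family S ⊆ Con 𝐀, (⋁S)|_B = ⋁{θ|_B : θ∈S} and (⋀S)|_B = ⋀{θ|_B : θ∈S}. -/
/-!
Restriction `α ↦ α|_B` and McKenzie's hat `β ↦ β̂` form a Galois connection between `Con 𝐀` and
`Con 𝐁`: `α|_B ⊆ β ↔ α ⊆ β̂`. Since `e` is idempotent, `β̂|_B = β`, so restriction is surjective,
and as a lower adjoint it preserves all joins. Meets are intersections on both sides, and
intersections commute with restriction.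
-/

theorem Set.sInter_inter_eq_inter_sInter_image_inter {α : Type*} (S : Set (Set α)) (C : Set α) :
    ⋂₀ S ∩ C = C ∩ ⋂₀ ((fun t => t ∩ C) '' S) := by
  ext p
  simp only [Set.mem_inter_iff, Set.mem_sInter, Set.forall_mem_image]
  exact ⟨fun ⟨hS, hC⟩ => ⟨hC, fun t ht => ⟨hS t ht, hC⟩⟩,
    fun ⟨hC, hS⟩ => ⟨fun t ht => (hS ht).1, hC⟩⟩

namespace Overalg

variable {A : Type*} {F : Set (A → A)} {e : A → A}

/-- The restriction `α|_B` to `B = e(A)`. -/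
def restrict (e : A → A) (α : Set (A × A)) : Set (A × A) :=
  α ∩ (Set.range e ×ˢ Set.range e)

theorem IsCon.map_mem_of_pol1 {θ : Set (A × A)} (hθ : IsCon F θ) {f : A → A} (hf : Pol1 F f)
    {x y : A} (hxy : (x, y) ∈ θ) : (f x, f y) ∈ θ := by
  induction hf generalizing x y with
  | base f hfF => exact hθ.2 f hfF (x, y) hxy
  | id => exact hxy
  | const a => exact hθ.1.1 a
  | comp f g _ _ ihf ihg => exact ihf (ihg hxy)

theorem IsCon.sInter {T : Set (Set (A × A))} (hT : ∀ θ ∈ T, IsCon F θ) : IsCon F (⋂₀ T) := by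
  unfold IsCon IsEquivRel
  simp only [Set.mem_sInter]
  refine ⟨⟨?_, ?_, ?_⟩, ?_⟩
  · exact fun x θ hθ => (hT θ hθ).1.1 x
  · exact fun x y h θ hθ => (hT θ hθ).1.2.1 x y (h θ hθ)
  · exact fun x y z h₁ h₂ θ hθ => (hT θ hθ).1.2.2 x y z (h₁ θ hθ) (h₂ θ hθ)
  · exact fun f hf p hp θ hθ => (hT θ hθ).2 f hf p (hp θ hθ)

theorem isCon_cgA (s : Set (A × A)) : IsCon F (cgA F s) :=
  IsCon.sInter fun _ hθ => hθ.1

theorem subset_cgA (s : Set (A × A)) : s ⊆ cgA F s :=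
  Set.subset_sInter fun _ hθ => hθ.2

theorem cgA_subset {s θ : Set (A × A)} (hθ : IsCon F θ) (hs : s ⊆ θ) : cgA F s ⊆ θ :=
  Set.sInter_subset_of_mem ⟨hθ, hs⟩

theorem IsConB.sInter {T : Set (Set (A × A))} (hne : T.Nonempty)
    (hT : ∀ β ∈ T, IsConB F e β) : IsConB F e (⋂₀ T) := by
  obtain ⟨β₀, hβ₀⟩ := hne
  refine ⟨⟨(Set.sInter_subset_of_mem hβ₀).trans (hT β₀ hβ₀).1.1, ?_, ?_, ?_⟩, ?_⟩ <;>
    simp only [Set.mem_sInter]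
  · exact fun x hx β hβ => (hT β hβ).1.2.1 x hx
  · exact fun x y h β hβ => (hT β hβ).1.2.2.1 x y (h β hβ)
  · exact fun x y z h₁ h₂ β hβ => (hT β hβ).1.2.2.2 x y z (h₁ β hβ) (h₂ β hβ)
  · exact fun f hf p hp β hβ => (hT β hβ).2 f hf p (hp β hβ)

theorem isConB_range_prod_range : IsConB F e (Set.range e ×ˢ Set.range e) := by
  refine ⟨⟨subset_rfl, ?_, ?_, ?_⟩, ?_⟩
  · exact fun x hx => ⟨hx, hx⟩
  · exact fun x y ⟨hx, hy⟩ => ⟨hy, hx⟩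
  · exact fun x y z ⟨hx, _⟩ ⟨_, hz⟩ => ⟨hx, hz⟩
  · exact fun f _ p _ => ⟨⟨f p.1, rfl⟩, ⟨f p.2, rfl⟩⟩

theorem isConB_cgB {s : Set (A × A)} (hs : s ⊆ Set.range e ×ˢ Set.range e) :
    IsConB F e (cgB F e s) :=
  IsConB.sInter ⟨_, isConB_range_prod_range, hs⟩ fun _ hβ => hβ.1

theorem subset_cgB (s : Set (A × A)) : s ⊆ cgB F e s :=
  Set.subset_sInter fun _ hβ => hβ.2

theorem cgB_subset {s β : Set (A × A)} (hβ : IsConB F e β) (hs : s ⊆ β) : cgB F e s ⊆ β :=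
  Set.sInter_subset_of_mem ⟨hβ, hs⟩

theorem IsCon.isConB_restrict (heP : Pol1 F e) {α : Set (A × A)} (hα : IsCon F α) :
    IsConB F e (restrict e α) := by
  obtain ⟨hrefl, hsymm, htrans⟩ := hα.1
  refine ⟨⟨Set.inter_subset_right, ?_, ?_, ?_⟩, ?_⟩
  · exact fun x hx => ⟨hrefl x, hx, hx⟩
  · exact fun x y ⟨hxy, hx, hy⟩ => ⟨hsymm x y hxy, hy, hx⟩
  · exact fun x y z ⟨hxy, hx, _⟩ ⟨hyz, _, hz⟩ => ⟨htrans x y z hxy hyz, hx, hz⟩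
  · exact fun f hf p hp =>
      ⟨hα.map_mem_of_pol1 (Pol1.comp e f heP hf) hp.1, ⟨f p.1, rfl⟩, ⟨f p.2, rfl⟩⟩

theorem IsConB.isCon_hatRel {β : Set (A × A)} (hβ : IsConB F e β) : IsCon F (hatRel F e β) := by
  obtain ⟨⟨_, hrefl, hsymm, htrans⟩, _⟩ := hβ
  refine ⟨⟨?_, ?_, ?_⟩, ?_⟩
  · exact fun x f _ => hrefl _ ⟨f x, rfl⟩
  · exact fun x y h f hf => hsymm _ _ (h f hf)
  · exact fun x y z h₁ h₂ f hf => htrans _ _ _ (h₁ f hf) (h₂ f hf)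
  · exact fun f hfF p hp g hg => hp (g ∘ f) (Pol1.comp g f hg (Pol1.base f hfF))

theorem restrict_hatRel (hee : e ∘ e = e) {β : Set (A × A)} (hβ : IsConB F e β) :
    restrict e (hatRel F e β) = β := by
  refine Set.Subset.antisymm ?_ fun p hp => ⟨fun f hf => hβ.2 f hf p hp, hβ.1.1 hp⟩
  rintro ⟨_, _⟩ ⟨hhat, ⟨a, rfl⟩, ⟨b, rfl⟩⟩
  have hfix : ∀ c, e (e c) = e c := congrFun hee
  simpa only [id, hfix] using hhat id Pol1.id

theorem restrict_subset_iff_subset_hatRel (heP : Pol1 F e) (hee : e ∘ e = e)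
    {α β : Set (A × A)} (hα : IsCon F α) (hβ : IsConB F e β) :
    restrict e α ⊆ β ↔ α ⊆ hatRel F e β := by
  refine ⟨fun h p hp f hf => h ⟨?_, ⟨f p.1, rfl⟩, ⟨f p.2, rfl⟩⟩, fun h => ?_⟩
  · exact hα.map_mem_of_pol1 (Pol1.comp e f heP hf) hp
  · rw [← restrict_hatRel hee hβ]
    exact Set.inter_subset_inter_left _ h

theorem restrict_cgA_sUnion (heP : Pol1 F e) (hee : e ∘ e = e) {S : Set (Set (A × A))}
    (hS : ∀ θ ∈ S, IsCon F θ) :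
    restrict e (cgA F (⋃₀ S)) = cgB F e (⋃₀ (restrict e '' S)) := by
  have ht : ⋃₀ (restrict e '' S) ⊆ Set.range e ×ˢ Set.range e :=
    Set.sUnion_subset (Set.forall_mem_image.2 fun _ _ => Set.inter_subset_right)
  have hcgB := isConB_cgB (F := F) ht
  apply Set.Subset.antisymm
  · refine (restrict_subset_iff_subset_hatRel heP hee (isCon_cgA _) hcgB).2 <|
      cgA_subset hcgB.isCon_hatRel <| Set.sUnion_subset fun θ hθ => ?_
    exact (restrict_subset_iff_subset_hatRel heP hee (hS θ hθ) hcgB).1 <|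
      (Set.subset_sUnion_of_mem (Set.mem_image_of_mem _ hθ)).trans (subset_cgB _)
  · refine cgB_subset ((isCon_cgA _).isConB_restrict heP) <|
      Set.sUnion_subset (Set.forall_mem_image.2 fun θ hθ => ?_)
    exact Set.inter_subset_inter_left _ ((Set.subset_sUnion_of_mem hθ).trans (subset_cgA _))

end Overalg

open Overalg in
/-- The restriction map `α ↦ α|_B : Con 𝐀 → Con 𝐁` is surjective and preserves arbitrary
meets and arbitrary joins: for every family `S ⊆ Con 𝐀`, the meet (join) of `S` in
`Con 𝐀` restricts to the meet (join) in `Con 𝐁` of the family of restrictions. -/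
theorem restriction_surjective_complete_hom {A : Type*} (F : Set (A → A)) (e : A → A)
    (heP : Pol1 F e) (hee : e ∘ e = e) :
    (∀ β : Set (A × A), IsConB F e β →
      ∃ α : Set (A × A), IsCon F α ∧ α ∩ (Set.range e ×ˢ Set.range e) = β) ∧
    (∀ S : Set (Set (A × A)), (∀ θ ∈ S, IsCon F θ) →
      -- meets: the meet in `Con 𝐀` is `⋂₀ S`, the meet in `Con 𝐁` of the restrictions is
      -- `(B ×ˢ B) ∩ ⋂₀ {θ|_B : θ ∈ S}`
      (⋂₀ S) ∩ (Set.range e ×ˢ Set.range e) =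
        (Set.range e ×ˢ Set.range e) ∩
          ⋂₀ ((fun θ => θ ∩ (Set.range e ×ˢ Set.range e)) '' S) ∧
      -- joins: the join in `Con 𝐀` is the congruence generated by `⋃₀ S`, the join in
      -- `Con 𝐁` of the restrictions is the `𝐁`-congruence generated by their union
      (cgA F (⋃₀ S)) ∩ (Set.range e ×ˢ Set.range e) =
        cgB F e (⋃₀ ((fun θ => θ ∩ (Set.range e ×ˢ Set.range e)) '' S))) :=
  ⟨fun β hβ => ⟨hatRel F e β, hβ.isCon_hatRel, restrict_hatRel hee hβ⟩,
    fun S hS => ⟨Set.sInter_inter_eq_inter_sInter_image_inter S _,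
      restrict_cgA_sUnion heP hee hS⟩⟩
end

section
/- In the overalgebra 𝐀 of the first type, for every β ∈ Con 𝐁 the relation β⋆ = ⋃_{k=0}^{K} β^k ∪ ⋃_{r=1}^{m} (C_r ∪ ⋃_{i∈ℐ_r} C_r^i)² is a congruence of 𝐀, and it is the smallest congruence θ of 𝐀 satisfying θ∩(B×B) = β (that is, β⋆ = β*, the congruence of 𝐀 generated by β). -/
namespace Overalg

/-- The data of an *overalgebra of the first type* built over a finite base algebra
`𝐁 = ⟨B 0, F⟩` from a tie-point sequence `t 1, …, t K` and a partition
`T 1 | ⋯ | T N` of the index set `{1, …, K}`.  The universe is `A = B 0 ∪ ⋯ ∪ B K`,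
where `B i ∩ B 0 = {t i}`, `π i : B 0 → B i` is a bijection fixing `t i`,
`e0` maps each `π i b` back to `b`, and `s n` collapses each `B i` with `i ∈ T n`
to its tie-point `t i` and is the identity elsewhere. -/
structure OvI (A : Type*) where
  K : ℕ
  N : ℕ
  B : ℕ → Set A
  F : Set (A → A)
  t : ℕ → A
  π : ℕ → A → A
  T : ℕ → Set ℕ
  e0 : A → A
  s : ℕ → A → A
  hfin : Finite A
  /-- `A = B 0 ∪ B 1 ∪ ⋯ ∪ B K` -/
  hA : ∀ x : A, ∃ i ≤ K, x ∈ B i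
  /-- the base operations map `B 0` into itself -/
  hF : ∀ f ∈ F, Set.MapsTo f (B 0) (B 0)
  /-- each tie-point `t i` lies in `B 0`, and `B i ∩ B 0 = {t i}` -/
  ht : ∀ i, 1 ≤ i → i ≤ K → t i ∈ B 0 ∧ B i ∩ B 0 = {t i}
  /-- for `i ≠ j`: `B i ∩ B j = {t i}` if `t i = t j`, and `B i ∩ B j = ∅` otherwise -/
  hdisj : ∀ i j, 1 ≤ i → i ≤ K → 1 ≤ j → j ≤ K → i ≠ j →
    (t i = t j → B i ∩ B j = {t i}) ∧ (t i ≠ t j → B i ∩ B j = ∅)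
  /-- `π 0` is the identity -/
  hπ0 : ∀ x : A, π 0 x = x
  /-- `π i` is a bijection of `B 0` onto `B i` -/
  hπbij : ∀ i, 1 ≤ i → i ≤ K → Set.BijOn (π i) (B 0) (B i)
  /-- `π i` fixes the tie-point `t i` -/
  hπt : ∀ i, 1 ≤ i → i ≤ K → π i (t i) = t i
  /-- each block `T n` consists of indices in `{1, …, K}` -/
  hT1 : ∀ n, 1 ≤ n → n ≤ N → T n ⊆ Set.Icc 1 K
  /-- the blocks `T 1, …, T N` partition `{1, …, K}` -/
  hT2 : ∀ i, 1 ≤ i → i ≤ K → ∃! n, 1 ≤ n ∧ n ≤ N ∧ i ∈ T n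
  /-- `e0 (π i b) = b` for `b ∈ B 0`; this says `e0 x = π_{ιx}⁻¹ x` -/
  he0 : ∀ i ≤ K, ∀ b ∈ B 0, e0 (π i b) = b
  /-- `s n` collapses `B i` to `t i` for `i ∈ T n` … -/
  hs1 : ∀ n, 1 ≤ n → n ≤ N → ∀ i ∈ T n, ∀ x ∈ B i, s n x = t i
  /-- … and is the identity elsewhere -/
  hs2 : ∀ n, 1 ≤ n → n ≤ N → ∀ x : A, (∀ i ∈ T n, x ∉ B i) → s n x = x

namespace OvI

variable {A : Type*} (O : OvI A)

/-- `e k = π k ∘ e0`: the idempotent map of `A` onto `B k`. -/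
def e (k : ℕ) : A → A := fun x => O.π k (O.e0 x)

/-- The operations of the overalgebra:
`F_A = {f ∘ e0 : f ∈ F} ∪ {e k : 0 ≤ k ≤ K} ∪ {s n : 1 ≤ n ≤ N}`. -/
def FA : Set (A → A) :=
  {g | ∃ f ∈ O.F, g = f ∘ O.e0} ∪ {g | ∃ k ≤ O.K, g = O.e k} ∪
    {g | ∃ n, 1 ≤ n ∧ n ≤ O.N ∧ g = O.s n}

/-- A congruence of the base algebra `𝐁 = ⟨B 0, F⟩`. -/
def ConB (β : Set (A × A)) : Prop :=
  IsEquivOn (O.B 0) β ∧ ∀ f ∈ O.F, ∀ p ∈ β, (f p.1, f p.2) ∈ β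

/-- The `β`-class of `c`. -/
def cls (_O : OvI A) (β : Set (A × A)) (c : A) : Set A := {x | (c, x) ∈ β}

/-- `β^k = {(π k x, π k y) : (x, y) ∈ β}`, the copy of `β` on `B k`. -/
def bk (β : Set (A × A)) (k : ℕ) : Set (A × A) :=
  {p | ∃ q ∈ β, p = (O.π k q.1, O.π k q.2)}

/-- For `c ∈ B 0` with class `C = c/β`, this is `C ∪ ⋃_{i ∈ ℐ} π i '' C`, where
`ℐ = {i : t i ∈ C}` — a block of `β⋆` meeting `B 0`. -/
def blk (β : Set (A × A)) (c : A) : Set A :=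
  O.cls β c ∪ ⋃ i ∈ {i | 1 ≤ i ∧ i ≤ O.K ∧ (c, O.t i) ∈ β}, O.π i '' O.cls β c

/-- `β⋆ = ⋃_{k=0}^{K} β^k ∪ ⋃_{r=1}^{m} (C_r ∪ ⋃_{i∈ℐ_r} C_r^i)²`. -/
def bstar (β : Set (A × A)) : Set (A × A) :=
  {p | ∃ k ≤ O.K, p ∈ O.bk β k} ∪
    {p | ∃ c ∈ O.B 0, p.1 ∈ O.blk β c ∧ p.2 ∈ O.blk β c}

/-- For `c, d ∈ B 0` in distinct `β`-classes `C_r = c/β`, `C_ℓ = d/β`, this is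
`⋃_{i ∈ T n ∩ ℐ_r} C_ℓ^i`. -/
def wing (β : Set (A × A)) (n : ℕ) (c d : A) : Set A :=
  ⋃ i ∈ {i | i ∈ O.T n ∧ (c, O.t i) ∈ β}, O.π i '' O.cls β d

/-- `β̃ = β⋆ ∪ ⋃_{n=1}^{N} ⋃_{r=1}^m ⋃_{ℓ≠r} (⋃_{i ∈ 𝒯_n ∩ ℐ_r} C_ℓ^i)²`. -/
def btilde (β : Set (A × A)) : Set (A × A) :=
  O.bstar β ∪
    {p | ∃ n, 1 ≤ n ∧ n ≤ O.N ∧ ∃ c ∈ O.B 0, ∃ d ∈ O.B 0, (c, d) ∉ β ∧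
      p.1 ∈ O.wing β n c d ∧ p.2 ∈ O.wing β n c d}

end OvI

end Overalg

/-! A pair `(x, y)` lies in `β⋆` iff `e₀ x β e₀ y` and either `x` and `y` lie on a common sheet
`B k`, or both are attached: each lies in `B 0` or in a sheet `B i` whose tie-point `t i` is
`β`-related to its `e₀`-image. In this form `β⋆` is transitive because a point on two distinct
sheets lies in `B 0`, and attachment spreads along `β`-related pairs of one sheet; each operation
of `𝐀` visibly preserves the description. Conversely a congruence `θ ⊇ β` contains every `β^k`
(apply `e k`), and relates an attached `x ∈ B i` to `t i = e i (t i)` and `t i` to `e₀ x`. -/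

namespace Overalg

variable {A : Type*}

theorem IsCon.map_mem {F : Set (A → A)} {θ : Set (A × A)} (hθ : IsCon F θ) {f : A → A}
    (hf : f ∈ F) {x y : A} (h : (x, y) ∈ θ) : (f x, f y) ∈ θ :=
  hθ.2 f hf (x, y) h

namespace OvI

variable {O : OvI A} {β : Set (A × A)}

theorem bijOn_π {k : ℕ} (hk : k ≤ O.K) : Set.BijOn (O.π k) (O.B 0) (O.B k) := by
  rcases k.eq_zero_or_pos with rfl | hk1
  · rw [show O.π 0 = id from funext O.hπ0]
    exact Set.bijOn_id _
  · exact O.hπbij k hk1 hk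

theorem e0_π {k : ℕ} (hk : k ≤ O.K) {b : A} (hb : b ∈ O.B 0) : O.e0 (O.π k b) = b :=
  O.he0 k hk b hb

theorem e0_of_mem {x : A} (hx : x ∈ O.B 0) : O.e0 x = x := by
  simpa only [O.hπ0] using e0_π (Nat.zero_le _) hx

theorem e0_mem (x : A) : O.e0 x ∈ O.B 0 := by
  obtain ⟨k, hk, hx⟩ := O.hA x
  obtain ⟨b, hb, rfl⟩ := (bijOn_π hk).surjOn hx
  rwa [e0_π hk hb]

theorem e_zero (x : A) : O.e 0 x = O.e0 x :=
  O.hπ0 _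

theorem e_e0 (k : ℕ) (x : A) : O.e k (O.e0 x) = O.e k x := by
  rw [e, e, e0_of_mem (e0_mem x)]

theorem e_of_mem {k : ℕ} (hk : k ≤ O.K) {x : A} (hx : x ∈ O.B k) : O.e k x = x := by
  obtain ⟨b, hb, rfl⟩ := (bijOn_π hk).surjOn hx
  rw [e, e0_π hk hb]

theorem mem_of_e_eq {k : ℕ} (hk : k ≤ O.K) {x : A} (hx : O.e k x = x) : x ∈ O.B k :=
  hx ▸ (bijOn_π hk).mapsTo (e0_mem x)

theorem eq_t_of_mem {k : ℕ} (hk1 : 1 ≤ k) (hk : k ≤ O.K) {x : A} (hxk : x ∈ O.B k)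
    (hx0 : x ∈ O.B 0) : x = O.t k := by
  have hx : x ∈ O.B k ∩ O.B 0 := ⟨hxk, hx0⟩
  rwa [(O.ht k hk1 hk).2] at hx

theorem mem_B0_of_mem_of_mem {i j : ℕ} (hi : i ≤ O.K) (hj : j ≤ O.K) (hij : i ≠ j) {x : A}
    (hxi : x ∈ O.B i) (hxj : x ∈ O.B j) : x ∈ O.B 0 := by
  rcases i.eq_zero_or_pos with rfl | hi1
  · exact hxi
  rcases j.eq_zero_or_pos with rfl | hj1
  · exact hxj
  have hx : x ∈ O.B i ∩ O.B j := ⟨hxi, hxj⟩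
  by_cases ht : O.t i = O.t j
  · rw [(O.hdisj i j hi1 hi hj1 hj hij).1 ht, Set.mem_singleton_iff] at hx
    exact hx ▸ (O.ht i hi1 hi).1
  · rw [(O.hdisj i j hi1 hi hj1 hj hij).2 ht] at hx
    exact hx.elim

theorem zero_notMem_T {n : ℕ} (hn1 : 1 ≤ n) (hnN : n ≤ O.N) : 0 ∉ O.T n :=
  fun h => absurd (O.hT1 n hn1 hnN h).1 (by decide)

theorem s_of_mem_of_notMem {n k : ℕ} (hn1 : 1 ≤ n) (hnN : n ≤ O.N) (hk : k ≤ O.K)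
    (hkn : k ∉ O.T n) {x : A} (hx : x ∈ O.B k) : O.s n x = x := by
  by_cases h : ∃ i ∈ O.T n, x ∈ O.B i
  · obtain ⟨i, hin, hxi⟩ := h
    obtain ⟨hi1, hi⟩ := O.hT1 n hn1 hnN hin
    have hik : i ≠ k := fun hik => hkn (hik ▸ hin)
    rw [O.hs1 n hn1 hnN i hin x hxi,
      eq_t_of_mem hi1 hi hxi (mem_B0_of_mem_of_mem hi hk hik hxi hx)]
  · push Not at h
    exact O.hs2 n hn1 hnN x h

theorem s_of_mem_B0 {n : ℕ} (hn1 : 1 ≤ n) (hnN : n ≤ O.N) {x : A} (hx : x ∈ O.B 0) :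
    O.s n x = x :=
  s_of_mem_of_notMem hn1 hnN (Nat.zero_le _) (zero_notMem_T hn1 hnN) hx

theorem e_mem_FA {k : ℕ} (hk : k ≤ O.K) : O.e k ∈ O.FA :=
  Or.inl (Or.inr ⟨k, hk, rfl⟩)

namespace ConB

theorem mem_B0 (hβ : O.ConB β) {x y : A} (h : (x, y) ∈ β) : x ∈ O.B 0 ∧ y ∈ O.B 0 :=
  hβ.1.1 h

theorem refl (hβ : O.ConB β) {x : A} (hx : x ∈ O.B 0) : (x, x) ∈ β :=
  hβ.1.2.1 x hx

theorem symm (hβ : O.ConB β) {x y : A} (h : (x, y) ∈ β) : (y, x) ∈ β :=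
  hβ.1.2.2.1 x y h

theorem trans (hβ : O.ConB β) {x y z : A} (hxy : (x, y) ∈ β) (hyz : (y, z) ∈ β) :
    (x, z) ∈ β :=
  hβ.1.2.2.2 x y z hxy hyz

end ConB

/-- `x` lies in a block `C ∪ ⋃_{i ∈ ℐ} C^i` of `β⋆`, namely the one with `C = e₀ x / β`. -/
def Attached (O : OvI A) (β : Set (A × A)) (x : A) : Prop :=
  x ∈ O.B 0 ∨ ∃ i, 1 ≤ i ∧ i ≤ O.K ∧ O.e i x = x ∧ (O.t i, O.e0 x) ∈ β

def SameSheet (O : OvI A) (x y : A) : Prop :=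
  ∃ k ≤ O.K, O.e k x = x ∧ O.e k y = y

theorem mem_blk_iff (hβ : O.ConB β) {c z : A} :
    z ∈ O.blk β c ↔ (c, O.e0 z) ∈ β ∧ O.Attached β z := by
  simp only [blk, cls, Set.mem_union, Set.mem_iUnion, Set.mem_image, Set.mem_ofPred_eq,
    exists_prop]
  constructor
  · rintro (h | ⟨i, ⟨hi1, hi, hct⟩, w, hcw, rfl⟩)
    · have hz := (hβ.mem_B0 h).2
      rw [e0_of_mem hz]
      exact ⟨h, Or.inl hz⟩
    · have hw := (hβ.mem_B0 hcw).2
      rw [e0_π hi hw]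
      refine ⟨hcw, Or.inr ⟨i, hi1, hi, by rw [e, e0_π hi hw], ?_⟩⟩
      rw [e0_π hi hw]
      exact hβ.trans (hβ.symm hct) hcw
  · rintro ⟨hcz, hz0 | ⟨i, hi1, hi, hzi, hti⟩⟩
    · left
      rwa [e0_of_mem hz0] at hcz
    · exact Or.inr ⟨i, ⟨hi1, hi, hβ.trans hcz (hβ.symm hti)⟩, O.e0 z, hcz, hzi⟩

theorem mem_bstar_iff (hβ : O.ConB β) {x y : A} :
    (x, y) ∈ O.bstar β ↔
      (O.e0 x, O.e0 y) ∈ β ∧ (O.SameSheet x y ∨ O.Attached β x ∧ O.Attached β y) := by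
  constructor
  · rintro (⟨k, hk, ⟨a, b⟩, hab, hxy⟩ | ⟨c, -, hx, hy⟩)
    · obtain ⟨rfl, rfl⟩ := Prod.mk.inj hxy
      obtain ⟨ha, hb⟩ := hβ.mem_B0 hab
      rw [e0_π hk ha, e0_π hk hb]
      exact ⟨hab, Or.inl ⟨k, hk, by rw [e, e0_π hk ha], by rw [e, e0_π hk hb]⟩⟩
    · rw [mem_blk_iff hβ] at hx hy
      exact ⟨hβ.trans (hβ.symm hx.1) hy.1, Or.inr ⟨hx.2, hy.2⟩⟩
  · rintro ⟨hxy, ⟨k, hk, hx, hy⟩ | ⟨hx, hy⟩⟩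
    · exact Or.inl ⟨k, hk, (O.e0 x, O.e0 y), hxy, Prod.ext hx.symm hy.symm⟩
    · exact Or.inr ⟨O.e0 x, e0_mem x, (mem_blk_iff hβ).2 ⟨hβ.refl (e0_mem x), hx⟩,
        (mem_blk_iff hβ).2 ⟨hxy, hy⟩⟩

theorem subset_bstar : β ⊆ O.bstar β := by
  rintro ⟨x, y⟩ h
  exact Or.inl ⟨0, Nat.zero_le _, (x, y), h, by simp only [O.hπ0]⟩

theorem attached_of_sameSheet (hβ : O.ConB β) {k : ℕ} (hk : k ≤ O.K) {x y : A}
    (hx : O.e k x = x) (hy : O.e k y = y) (hxy : (O.e0 x, O.e0 y) ∈ β)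
    (hya : O.Attached β y) : O.Attached β x := by
  rcases k.eq_zero_or_pos with rfl | hk1
  · exact Or.inl (by rw [← hx, e_zero]; exact e0_mem x)
  have hyk := mem_of_e_eq hk hy
  have ht_of_mem_B0 (hy0 : y ∈ O.B 0) : (O.t k, O.e0 y) ∈ β := by
    rw [e0_of_mem hy0, ← eq_t_of_mem hk1 hk hyk hy0]
    exact hβ.refl hy0
  suffices ht : (O.t k, O.e0 y) ∈ β from Or.inr ⟨k, hk1, hk, hx, hβ.trans ht (hβ.symm hxy)⟩
  rcases hya with hy0 | ⟨i, -, hi, hyi, hti⟩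
  · exact ht_of_mem_B0 hy0
  · obtain rfl | hik := eq_or_ne i k
    · exact hti
    · exact ht_of_mem_B0 (mem_B0_of_mem_of_mem hi hk hik (mem_of_e_eq hi hyi) hyk)

theorem bstar_trans (hβ : O.ConB β) {x y z : A} (hxy : (x, y) ∈ O.bstar β)
    (hyz : (y, z) ∈ O.bstar β) : (x, z) ∈ O.bstar β := by
  rw [mem_bstar_iff hβ] at *
  obtain ⟨hxy, hsxy⟩ := hxy
  obtain ⟨hyz, hsyz⟩ := hyz
  refine ⟨hβ.trans hxy hyz, ?_⟩
  rcases hsxy with ⟨k, hk, hxk, hyk⟩ | ⟨hx, hy⟩ <;>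
    rcases hsyz with ⟨j, hj, hyj, hzj⟩ | ⟨hy', hz⟩
  · obtain rfl | hkj := eq_or_ne k j
    · exact Or.inl ⟨k, hk, hxk, hzj⟩
    have hy : O.Attached β y :=
      Or.inl (mem_B0_of_mem_of_mem hk hj hkj (mem_of_e_eq hk hyk) (mem_of_e_eq hj hyj))
    exact Or.inr ⟨attached_of_sameSheet hβ hk hxk hyk hxy hy,
      attached_of_sameSheet hβ hj hzj hyj (hβ.symm hyz) hy⟩
  · exact Or.inr ⟨attached_of_sameSheet hβ hk hxk hyk hxy hy', hz⟩
  · exact Or.inr ⟨hx, attached_of_sameSheet hβ hj hzj hyj (hβ.symm hyz) hy⟩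
  · exact Or.inr ⟨hx, hz⟩

theorem isEquivRel_bstar (hβ : O.ConB β) : IsEquivRel (O.bstar β) := by
  refine ⟨fun x => ?_, fun x y h => ?_, fun x y z => bstar_trans hβ⟩
  · obtain ⟨k, hk, hx⟩ := O.hA x
    exact (mem_bstar_iff hβ).2
      ⟨hβ.refl (e0_mem x), Or.inl ⟨k, hk, e_of_mem hk hx, e_of_mem hk hx⟩⟩
  · rw [mem_bstar_iff hβ] at h ⊢
    exact ⟨hβ.symm h.1, h.2.imp (fun ⟨k, hk, hx, hy⟩ => ⟨k, hk, hy, hx⟩) And.symm⟩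

theorem attached_s_apply (hβ : O.ConB β) {n : ℕ} (hn1 : 1 ≤ n) (hnN : n ≤ O.N) {x : A}
    (hx : O.Attached β x) : O.Attached β (O.s n x) ∧ (O.e0 (O.s n x), O.e0 x) ∈ β := by
  rcases hx with hx0 | ⟨i, hi1, hi, hxi, hti⟩
  · rw [s_of_mem_B0 hn1 hnN hx0]
    exact ⟨Or.inl hx0, hβ.refl (e0_mem x)⟩
  by_cases hin : i ∈ O.T n
  · have ht0 := (O.ht i hi1 hi).1
    rw [O.hs1 n hn1 hnN i hin x (mem_of_e_eq hi hxi), e0_of_mem ht0]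
    exact ⟨Or.inl ht0, hti⟩
  · rw [s_of_mem_of_notMem hn1 hnN hi hin (mem_of_e_eq hi hxi)]
    exact ⟨Or.inr ⟨i, hi1, hi, hxi, hti⟩, hβ.refl (e0_mem x)⟩

theorem s_mem_bstar (hβ : O.ConB β) {n : ℕ} (hn1 : 1 ≤ n) (hnN : n ≤ O.N) {x y : A}
    (h : (x, y) ∈ O.bstar β) : (O.s n x, O.s n y) ∈ O.bstar β := by
  obtain ⟨hxy, ⟨k, hk, hx, hy⟩ | ⟨hx, hy⟩⟩ := (mem_bstar_iff hβ).1 h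
  · by_cases hkn : k ∈ O.T n
    · rw [O.hs1 n hn1 hnN k hkn x (mem_of_e_eq hk hx),
        O.hs1 n hn1 hnN k hkn y (mem_of_e_eq hk hy)]
      exact (isEquivRel_bstar hβ).1 _
    · rwa [s_of_mem_of_notMem hn1 hnN hk hkn (mem_of_e_eq hk hx),
        s_of_mem_of_notMem hn1 hnN hk hkn (mem_of_e_eq hk hy)]
  · obtain ⟨hx', hsx⟩ := attached_s_apply hβ hn1 hnN hx
    obtain ⟨hy', hsy⟩ := attached_s_apply hβ hn1 hnN hy
    exact (mem_bstar_iff hβ).2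
      ⟨hβ.trans hsx (hβ.trans hxy (hβ.symm hsy)), Or.inr ⟨hx', hy'⟩⟩

theorem isCon_bstar (hβ : O.ConB β) : IsCon O.FA (O.bstar β) := by
  refine ⟨isEquivRel_bstar hβ, ?_⟩
  rintro _ ((⟨f, hf, rfl⟩ | ⟨k, hk, rfl⟩) | ⟨n, hn1, hnN, rfl⟩) ⟨x, y⟩ h
  · exact subset_bstar (hβ.2 f hf _ ((mem_bstar_iff hβ).1 h).1)
  · exact Or.inl ⟨k, hk, (O.e0 x, O.e0 y), ((mem_bstar_iff hβ).1 h).1, rfl⟩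
  · exact s_mem_bstar hβ hn1 hnN h

theorem bstar_inter_B0 (hβ : O.ConB β) : O.bstar β ∩ (O.B 0 ×ˢ O.B 0) = β := by
  ext ⟨x, y⟩
  refine ⟨fun ⟨h, hx, hy⟩ => ?_, fun h => ⟨subset_bstar h, hβ.mem_B0 h⟩⟩
  simpa only [e0_of_mem hx, e0_of_mem hy] using ((mem_bstar_iff hβ).1 h).1

section Minimality

variable {θ : Set (A × A)} (hθ : IsCon O.FA θ) (hβθ : β ⊆ θ)
include hθ hβθ

theorem mk_e0_mem_of_attached {x : A} (hx : O.Attached β x) : (x, O.e0 x) ∈ θ := by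
  rcases hx with hx0 | ⟨i, hi1, hi, hxi, hti⟩
  · rw [e0_of_mem hx0]
    exact hθ.1.1 x
  have ht : O.e i (O.t i) = O.t i := by
    rw [e, e0_of_mem (O.ht i hi1 hi).1, O.hπt i hi1 hi]
  have h := hθ.map_mem (e_mem_FA hi) (hβθ hti)
  rw [ht, e_e0, hxi] at h
  exact hθ.1.2.2 _ _ _ (hθ.1.2.1 _ _ h) (hβθ hti)

theorem bstar_subset (hβ : O.ConB β) : O.bstar β ⊆ θ := by
  rintro ⟨x, y⟩ h
  obtain ⟨hxy, ⟨k, hk, hx, hy⟩ | ⟨hx, hy⟩⟩ := (mem_bstar_iff hβ).1 h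
  · have h := hθ.map_mem (e_mem_FA hk) (hβθ hxy)
    rwa [e_e0, e_e0, hx, hy] at h
  · obtain ⟨-, hsymm, htrans⟩ := hθ.1
    exact htrans _ _ _ (mk_e0_mem_of_attached hθ hβθ hx)
      (htrans _ _ _ (hβθ hxy) (hsymm _ _ (mk_e0_mem_of_attached hθ hβθ hy)))

end Minimality

end OvI

end Overalg

open Overalg OvI in
/-- In an overalgebra `𝐀` of the first type, for every `β ∈ Con 𝐁` the relation `β⋆`
is a congruence of `𝐀`; it is the smallest congruence `θ` of `𝐀` with `θ ∩ (B×B) = β`,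
i.e. `β⋆ = β*`, the congruence of `𝐀` generated by `β`. -/
theorem bstar_isLeast {A : Type*} (O : OvI A) (β : Set (A × A)) (hβ : O.ConB β) :
    IsCon O.FA (O.bstar β) ∧
    IsLeast {θ : Set (A × A) | IsCon O.FA θ ∧ θ ∩ (O.B 0 ×ˢ O.B 0) = β} (O.bstar β) ∧
    O.bstar β = ⋂₀ {θ : Set (A × A) | IsCon O.FA θ ∧ β ⊆ θ} := by
  have hcon := isCon_bstar hβ
  refine ⟨hcon, ⟨⟨hcon, bstar_inter_B0 hβ⟩, ?_⟩, ?_⟩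
  · rintro θ ⟨hθ, rfl⟩
    exact bstar_subset hθ Set.inter_subset_left hβ
  · exact (Set.subset_sInter fun θ hθ => bstar_subset hθ.1 hθ.2 hβ).antisymm
      (Set.sInter_subset_of_mem ⟨hcon, subset_bstar⟩)
end

section
/- In the overalgebra 𝐀 of the first type, every equivalence relation θ on A with β⋆ ⊆ θ ⊆ β̃ is a congruence of 𝐀; that is, every f ∈ F_A satisfies (f(x),f(y)) ∈ θ whenever (x,y) ∈ θ. -/
namespace Overalg.OvI

variable {A : Type*} (O : OvI A) {β : Set (A × A)}

lemma e0_id' (x : A) (hx : x ∈ O.B 0) : O.e0 x = x := by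
  have := O.he0 0 (Nat.zero_le _) x hx
  rwa [O.hπ0] at this

lemma πmem' (k : ℕ) (hk : k ≤ O.K) (u : A) (hu : u ∈ O.B 0) : O.π k u ∈ O.B k := by
  rcases Nat.eq_zero_or_pos k with h | h
  · subst h; rwa [O.hπ0]
  · exact (O.hπbij k h hk).mapsTo hu

lemma zero_not_T' (n : ℕ) (hn1 : 1 ≤ n) (hn2 : n ≤ O.N) : 0 ∉ O.T n := by
  intro h
  have := O.hT1 n hn1 hn2 h
  simp [Set.mem_Icc] at this

lemma sn_id' (n : ℕ) (hn1 : 1 ≤ n) (hn2 : n ≤ O.N) (k : ℕ) (hk : k ≤ O.K)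
    (hkT : k ∉ O.T n) (x : A) (hx : x ∈ O.B k) : O.s n x = x := by
  by_cases h : ∃ i ∈ O.T n, x ∈ O.B i
  · obtain ⟨i, hi, hxi⟩ := h
    have hiK := O.hT1 n hn1 hn2 hi
    have hi1 : 1 ≤ i := hiK.1
    have hi2 : i ≤ O.K := hiK.2
    have hik : i ≠ k := fun h => hkT (h ▸ hi)
    have hx_ti : x = O.t i := by
      rcases Nat.eq_zero_or_pos k with h0 | h0
      · subst h0
        have heq := (O.ht i hi1 hi2).2
        have hx' : x ∈ O.B i ∩ O.B 0 := ⟨hxi, hx⟩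
        rw [heq] at hx'; exact hx'
      · by_cases hti : O.t i = O.t k
        · have heq := (O.hdisj i k hi1 hi2 h0 hk hik).1 hti
          have hx' : x ∈ O.B i ∩ O.B k := ⟨hxi, hx⟩
          rw [heq] at hx'; exact hx'
        · have heq := (O.hdisj i k hi1 hi2 h0 hk hik).2 hti
          have hx' : x ∈ O.B i ∩ O.B k := ⟨hxi, hx⟩
          rw [heq] at hx'; exact hx'.elim
    rw [O.hs1 n hn1 hn2 i hi x hxi, hx_ti]
  · push_neg at h
    exact O.hs2 n hn1 hn2 x h

lemma e0_beta' (hβ : O.ConB β) {x y : A} (hxy : (x, y) ∈ O.btilde β) :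
    (O.e0 x, O.e0 y) ∈ β := by
  have hsymm := hβ.1.2.2.1
  have htrans := hβ.1.2.2.2
  simp only [btilde, bstar, bk, blk, wing, cls, Set.mem_union, Set.mem_setOf_eq,
    Set.mem_iUnion, Set.mem_image] at hxy
  rcases hxy with (⟨k, hk, q, hq, heq⟩ | ⟨c, _hc, hx, hy⟩) |
    ⟨n, hn1, hn2, c, _hc, d, _hd, _hcd, hx, hy⟩
  · have hmem := hβ.1.1 hq
    have heq1 : x = O.π k q.1 := congrArg Prod.fst heq
    have heq2 : y = O.π k q.2 := congrArg Prod.snd heq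
    rw [heq1, heq2, O.he0 k hk q.1 hmem.1, O.he0 k hk q.2 hmem.2]
    exact hq
  · have key : ∀ z : A, ((c, z) ∈ β ∨
        ∃ i, ∃ _ : (1 ≤ i ∧ i ≤ O.K ∧ (c, O.t i) ∈ β), ∃ u, (c, u) ∈ β ∧ O.π i u = z) →
        (c, O.e0 z) ∈ β := by
      rintro z (hz | ⟨i, ⟨_, hi2, _⟩, u, hu, rfl⟩)
      · have hz0 : z ∈ O.B 0 := (hβ.1.1 hz).2
        rwa [O.e0_id' z hz0]
      · have hu0 : u ∈ O.B 0 := (hβ.1.1 hu).2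
        rwa [O.he0 i hi2 u hu0]
    exact htrans _ _ _ (hsymm _ _ (key x hx)) (key y hy)
  · have key : ∀ z : A,
        (∃ i, ∃ _ : (i ∈ O.T n ∧ (c, O.t i) ∈ β), ∃ u, (d, u) ∈ β ∧ O.π i u = z) →
        (d, O.e0 z) ∈ β := by
      rintro z ⟨i, ⟨hiT, _⟩, u, hu, rfl⟩
      have hiK := O.hT1 n hn1 hn2 hiT
      have hu0 : u ∈ O.B 0 := (hβ.1.1 hu).2
      rwa [O.he0 i hiK.2 u hu0]
    exact htrans _ _ _ (hsymm _ _ (key x hx)) (key y hy)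

end Overalg.OvI

open Overalg OvI in
/-- In an overalgebra `𝐀` of the first type, every equivalence relation `θ` on `A` with
`β⋆ ⊆ θ ⊆ β̃` is a congruence of `𝐀`: every `f ∈ F_A` satisfies `(f x, f y) ∈ θ`
whenever `(x, y) ∈ θ`. -/
theorem equiv_between_bstar_btilde_isCon {A : Type*} (O : OvI A)
    (β : Set (A × A)) (hβ : O.ConB β)
    (θ : Set (A × A)) (hθ : IsEquivRel θ)
    (h1 : O.bstar β ⊆ θ) (h2 : θ ⊆ O.btilde β) :
    ∀ f ∈ O.FA, ∀ p ∈ θ, (f p.1, f p.2) ∈ θ := by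
  have hsymm := hβ.1.2.2.1
  have htrans := hβ.1.2.2.2
  have hβθ : β ⊆ θ := by
    intro p hp
    apply h1
    exact Set.mem_union_left _ ⟨0, Nat.zero_le _, p, hp, by simp [O.hπ0]⟩
  rintro f hf ⟨x, y⟩ hp
  simp only [FA, Set.mem_union, Set.mem_setOf_eq] at hf
  rcases hf with (⟨g, hg, rfl⟩ | ⟨k, hk, rfl⟩) | ⟨n, hn1, hn2, rfl⟩
  · show (g (O.e0 x), g (O.e0 y)) ∈ θ
    exact hβθ (hβ.2 g hg (O.e0 x, O.e0 y) (O.e0_beta' hβ (h2 hp)))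
  · show (O.π k (O.e0 x), O.π k (O.e0 y)) ∈ θ
    exact h1 (Set.mem_union_left _
      ⟨k, hk, (O.e0 x, O.e0 y), O.e0_beta' hβ (h2 hp), rfl⟩)
  · show (O.s n x, O.s n y) ∈ θ
    have hmem := h2 hp
    simp only [btilde, bstar, bk, blk, wing, cls, Set.mem_union, Set.mem_setOf_eq,
      Set.mem_iUnion, Set.mem_image] at hmem
    rcases hmem with (⟨k, hk, q, hq, heq⟩ | ⟨c, hc, hx, hy⟩) |
      ⟨n', hn'1, hn'2, c, hc, d, hd, hcd, hx, hy⟩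
    · have hmemB := hβ.1.1 hq
      have heq1 : x = O.π k q.1 := congrArg Prod.fst heq
      have heq2 : y = O.π k q.2 := congrArg Prod.snd heq
      subst heq1; subst heq2
      have hxB : O.π k q.1 ∈ O.B k := O.πmem' k hk q.1 hmemB.1
      have hyB : O.π k q.2 ∈ O.B k := O.πmem' k hk q.2 hmemB.2
      by_cases hkT : k ∈ O.T n
      · rw [O.hs1 n hn1 hn2 k hkT _ hxB, O.hs1 n hn1 hn2 k hkT _ hyB]
        exact hθ.1 _
      · rw [O.sn_id' n hn1 hn2 k hk hkT _ hxB, O.sn_id' n hn1 hn2 k hk hkT _ hyB]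
        exact hp
    · have key : ∀ z : A, ((c, z) ∈ β ∨
          ∃ i, ∃ _ : (1 ≤ i ∧ i ≤ O.K ∧ (c, O.t i) ∈ β), ∃ u, (c, u) ∈ β ∧ O.π i u = z) →
          ((c, O.s n z) ∈ β ∨
          ∃ i, ∃ _ : (1 ≤ i ∧ i ≤ O.K ∧ (c, O.t i) ∈ β), ∃ u, (c, u) ∈ β ∧ O.π i u = O.s n z) := by
        rintro z (hz | ⟨i, ⟨hi1, hi2, hcti⟩, u, hu, rfl⟩)
        · have hz0 : z ∈ O.B 0 := (hβ.1.1 hz).2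
          rw [O.sn_id' n hn1 hn2 0 (Nat.zero_le _) (O.zero_not_T' n hn1 hn2) z hz0]
          exact Or.inl hz
        · have hu0 : u ∈ O.B 0 := (hβ.1.1 hu).2
          have hzB : O.π i u ∈ O.B i := O.πmem' i hi2 u hu0
          by_cases hiT : i ∈ O.T n
          · rw [O.hs1 n hn1 hn2 i hiT _ hzB]
            exact Or.inl hcti
          · rw [O.sn_id' n hn1 hn2 i hi2 hiT _ hzB]
            exact Or.inr ⟨i, ⟨hi1, hi2, hcti⟩, u, hu, rfl⟩
      refine h1 (Set.mem_union_right _ ⟨c, hc, ?_, ?_⟩)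
      · simp only [blk, cls, Set.mem_union, Set.mem_setOf_eq, Set.mem_iUnion, Set.mem_image]
        exact key x hx
      · simp only [blk, cls, Set.mem_union, Set.mem_setOf_eq, Set.mem_iUnion, Set.mem_image]
        exact key y hy
    · obtain ⟨i, ⟨hiT, hcti⟩, u, hdu, rfl⟩ := hx
      obtain ⟨j, ⟨hjT, hctj⟩, v, hdv, rfl⟩ := hy
      have hiK := O.hT1 n' hn'1 hn'2 hiT
      have hjK := O.hT1 n' hn'1 hn'2 hjT
      have hu0 : u ∈ O.B 0 := (hβ.1.1 hdu).2
      have hv0 : v ∈ O.B 0 := (hβ.1.1 hdv).2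
      have hxB : O.π i u ∈ O.B i := O.πmem' i hiK.2 u hu0
      have hyB : O.π j v ∈ O.B j := O.πmem' j hjK.2 v hv0
      by_cases hnn : n = n'
      · subst hnn
        rw [O.hs1 n hn1 hn2 i hiT _ hxB, O.hs1 n hn1 hn2 j hjT _ hyB]
        exact hβθ (htrans _ _ _ (hsymm _ _ hcti) hctj)
      · have hiTn : i ∉ O.T n := fun h =>
          hnn ((O.hT2 i hiK.1 hiK.2).unique ⟨hn1, hn2, h⟩ ⟨hn'1, hn'2, hiT⟩)
        have hjTn : j ∉ O.T n := fun h =>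
          hnn ((O.hT2 j hjK.1 hjK.2).unique ⟨hn1, hn2, h⟩ ⟨hn'1, hn'2, hjT⟩)
        rw [O.sn_id' n hn1 hn2 i hiK.2 hiTn _ hxB, O.sn_id' n hn1 hn2 j hjK.2 hjTn _ hyB]
        exact hp
end
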